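/- With the notation of the previous statement, the 2-form C_E := ∇E₂ + E₁∧E₁ satisfies δ(C_E) = 0 and ∇(C_E) = 0; hence C_E is harmonic and defines a class in H²(M, 𝒫), the cohomology with coefficients in the sheaf of ∇-parallel sections of 𝔲(F). -/

import Mathlib

/-!
Differentiating the Yang–Mills equation twice at `t = 0`: since `∇E₁ = 0`, the quadratic part
`δ(E∧E) + E†(∇E)` contributes `δ(E₁∧E₁)` at order `t²`, the cubic part contributes nothing, and the
linear part contributes `δ∇E₂`; so `δ(∇E₂ + E₁∧E₁) = 0`. Flatness and the Leibniz rule give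
`∇(∇E₂ + E₁∧E₁) = ∇E₁∧E₁ − E₁∧∇E₁ = 0`.
-/

open Filter
open scoped RealInnerProductSpace Topology

section

variable {𝕜 α : Type*} [NontriviallyNormedField 𝕜] {l : Filter α}
  {V₁ V₂ V₃ : Type*} [NormedAddCommGroup V₁] [NormedSpace 𝕜 V₁]
  [NormedAddCommGroup V₂] [NormedSpace 𝕜 V₂] [NormedAddCommGroup V₃] [NormedSpace 𝕜 V₃]

theorem ContinuousLinearMap.tendsto_mul_smul_apply₂ (B : V₁ →L[𝕜] V₂ →L[𝕜] V₃)
    {c d : α → 𝕜} {x : α → V₁} {y : α → V₂} {a : V₁} {b : V₂}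
    (hx : Tendsto (fun i => c i • x i) l (𝓝 a)) (hy : Tendsto (fun i => d i • y i) l (𝓝 b)) :
    Tendsto (fun i => (c i * d i) • B (x i) (y i)) l (𝓝 (B a b)) :=
  ((B.continuous₂.tendsto (a, b)).comp (hx.prodMk_nhds hy)).congr fun i => by
    simp [smul_smul, mul_comm]

theorem tendsto_nhds_zero_of_tendsto_inv_smul {x : 𝕜 → V₁} {a : V₁}
    (hx : Tendsto (fun t => t⁻¹ • x t) (𝓝[≠] 0) (𝓝 a)) : Tendsto x (𝓝[≠] 0) (𝓝 0) := by
  have h := (tendsto_id.mono_left nhdsWithin_le_nhds).smul hx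
  rw [zero_smul] at h
  refine h.congr' ?_
  filter_upwards [self_mem_nhdsWithin] with t ht
  rw [id, smul_smul, mul_inv_cancel₀ ht, one_smul]

theorem nab_nab_add_wedge_eq_zero {nab : V₁ →L[𝕜] V₂} {nab2 : V₂ →L[𝕜] V₃}
    (hflat : ∀ x, nab2 (nab x) = 0) {W : V₁ →L[𝕜] V₁ →L[𝕜] V₂}
    {W2 : V₂ →L[𝕜] V₁ →L[𝕜] V₃} {W2' : V₁ →L[𝕜] V₂ →L[𝕜] V₃}
    (hLeib : ∀ x y, nab2 (W x y) = W2 (nab x) y - W2' x (nab y)) (e : V₁) {a : V₁}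
    (ha : nab a = 0) : nab2 (nab e + W a a) = 0 := by
  simp [hflat, hLeib, ha]

/-- `δ_{∇+x} F_{∇+x}` for flat `∇`, where `F_{∇+x} = ∇x + x∧x` and `δ_{∇+x} = δ + x†`. -/
def yangMillsOperator (nab : V₁ →L[𝕜] V₂) (δ : V₂ →L[𝕜] V₁) (W : V₁ →L[𝕜] V₁ →L[𝕜] V₂)
    (dag : V₁ →L[𝕜] V₂ →L[𝕜] V₁) (x : V₁) : V₁ :=
  δ (nab x) + δ (W x x) + dag x (nab x) + dag x (W x x)

theorem tendsto_inv_sq_smul_yangMillsOperator (nab : V₁ →L[𝕜] V₂) (δ : V₂ →L[𝕜] V₁)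
    (W : V₁ →L[𝕜] V₁ →L[𝕜] V₂) (dag : V₁ →L[𝕜] V₂ →L[𝕜] V₁) {E : 𝕜 → V₁} {E₁ E₂ : V₁}
    (hE₁ : Tendsto (fun t => t⁻¹ • E t) (𝓝[≠] 0) (𝓝 E₁))
    (hE₂ : Tendsto (fun t => (t ^ 2)⁻¹ • (E t - t • E₁)) (𝓝[≠] 0) (𝓝 E₂))
    (hE₁flat : nab E₁ = 0) :
    Tendsto (fun t => (t ^ 2)⁻¹ • yangMillsOperator nab δ W dag (E t)) (𝓝[≠] 0)
      (𝓝 (δ (nab E₂ + W E₁ E₁))) := by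
  have hsq : ∀ t : 𝕜, t⁻¹ * t⁻¹ = (t ^ 2)⁻¹ := fun t => by rw [sq, mul_inv]
  have hlin : Tendsto (fun t => (t ^ 2)⁻¹ • δ (nab (E t))) (𝓝[≠] 0) (𝓝 (δ (nab E₂))) :=
    (((δ.comp nab).continuous.tendsto E₂).comp hE₂).congr fun t => by simp [hE₁flat]
  have hW : Tendsto (fun t => (t ^ 2)⁻¹ • W (E t) (E t)) (𝓝[≠] 0) (𝓝 (W E₁ E₁)) := by
    simpa only [hsq] using W.tendsto_mul_smul_apply₂ hE₁ hE₁
  have hδW : Tendsto (fun t => (t ^ 2)⁻¹ • δ (W (E t) (E t))) (𝓝[≠] 0) (𝓝 (δ (W E₁ E₁))) := by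
    simpa only [Function.comp_def, map_smul] using (δ.continuous.tendsto _).comp hW
  have hnab : Tendsto (fun t => t⁻¹ • nab (E t)) (𝓝[≠] 0) (𝓝 0) := by
    simpa only [Function.comp_def, map_smul, hE₁flat] using (nab.continuous.tendsto _).comp hE₁
  have hquad : Tendsto (fun t => (t ^ 2)⁻¹ • dag (E t) (nab (E t))) (𝓝[≠] 0) (𝓝 0) := by
    simpa only [hsq, map_zero] using dag.tendsto_mul_smul_apply₂ hE₁ hnab
  have hcubic : Tendsto (fun t => (t ^ 2)⁻¹ • dag (E t) (W (E t) (E t))) (𝓝[≠] 0) (𝓝 0) := by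
    have hE : Tendsto (fun t => (1 : 𝕜) • E t) (𝓝[≠] 0) (𝓝 0) := by
      simpa only [one_smul] using tendsto_nhds_zero_of_tendsto_inv_smul hE₁
    simpa only [one_mul, map_zero, zero_apply]
      using dag.tendsto_mul_smul_apply₂ hE hW
  simpa only [yangMillsOperator, smul_add, map_add, add_zero] using
    ((hlin.add hδW).add hquad).add hcubic

end

theorem second_order_class_of_YangMills_curve_is_harmonic_general
    (V1 V2 V3 : Type)
    [NormedAddCommGroup V1] [InnerProductSpace ℝ V1]
    [NormedAddCommGroup V2] [InnerProductSpace ℝ V2]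
    [NormedAddCommGroup V3] [InnerProductSpace ℝ V3]
    (nab : V1 →L[ℝ] V2) (nab2 : V2 →L[ℝ] V3)
    (hflat : ∀ x : V1, nab2 (nab x) = 0)
    (δ : V2 →L[ℝ] V1)
    (W : V1 →L[ℝ] V1 →L[ℝ] V2)
    (W2 : V2 →L[ℝ] V1 →L[ℝ] V3) (W2' : V1 →L[ℝ] V2 →L[ℝ] V3)
    (hLeib : ∀ x y : V1, nab2 (W x y) = W2 (nab x) y - W2' x (nab y))
    (dag : V1 →L[ℝ] V2 →L[ℝ] V1)
    (E : ℝ → V1)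
    (E₁ E₂ : V1)
    (hE₁ : Filter.Tendsto (fun t : ℝ => t⁻¹ • E t) (𝓝[≠] 0) (𝓝 E₁))
    (hE₂ : Filter.Tendsto (fun t : ℝ => (t ^ 2)⁻¹ • (E t - t • E₁))
      (𝓝[≠] 0) (𝓝 E₂))
    (hYM : ∀ t : ℝ,
      δ (nab (E t)) + δ (W (E t) (E t)) + dag (E t) (nab (E t))
        + dag (E t) (W (E t) (E t)) = 0)
    (hE₁flat : nab E₁ = 0) :
    δ (nab E₂ + W E₁ E₁) = 0 ∧ nab2 (nab E₂ + W E₁ E₁) = 0 := by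
  refine ⟨?_, nab_nab_add_wedge_eq_zero hflat hLeib E₂ hE₁flat⟩
  have hYM_zero : (fun t : ℝ => (t ^ 2)⁻¹ • yangMillsOperator nab δ W dag (E t)) = fun _ => 0 :=
    funext fun t => by rw [yangMillsOperator, hYM t, smul_zero]
  refine tendsto_nhds_unique (tendsto_inv_sq_smul_yangMillsOperator nab δ W dag hE₁ hE₂ hE₁flat) ?_
  rw [hYM_zero]
  exact tendsto_const_nhds

/-- along a curve `∇_t = ∇ + E(t)` of Yang–Mills connections
with `∇` flat, `E(t) = tE₁ + t²E₂ + O(t³)` and `∇E₁ = 0` (already known), the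
2-form `C_E := ∇E₂ + E₁∧E₁` satisfies `δ(C_E) = 0` and `∇(C_E) = 0`; hence
`C_E` is harmonic and, by `H²(M,𝒫) ≅ Ker Δ₂` (Proposition P:4), it defines a
class in the cohomology `H²(M,𝒫)` with coefficients in the sheaf of
`∇`-parallel sections of `𝔲(F)`.

Model: `V1, V2, V3` are `A¹(𝔲(F)), A²(𝔲(F)), A³(𝔲(F))` with `L²` inner
products; `nab : V1 → V2` and `nab2 : V2 → V3` are the covariant exterior
derivatives of the flat connection (`nab2 ∘ nab = 0`), `δ` is the formal
adjoint of `nab`, `W` the wedge product, `dag x` the adjoint wedge–bracket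
operator `x†`, and `W2, W2'` express the Leibniz rule
`∇(x∧y) = ∇x∧y − x∧∇y` for `𝔲(F)`-valued 1-forms. -/
theorem second_order_class_of_YangMills_curve_is_harmonic
    (V1 V2 V3 : Type)
    [NormedAddCommGroup V1] [InnerProductSpace ℝ V1]
    [NormedAddCommGroup V2] [InnerProductSpace ℝ V2]
    [NormedAddCommGroup V3] [InnerProductSpace ℝ V3]
    (nab : V1 →L[ℝ] V2) (nab2 : V2 →L[ℝ] V3)
    (hflat : ∀ x : V1, nab2 (nab x) = 0)
    (δ : V2 →L[ℝ] V1)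
    (hadj : ∀ (x : V1) (y : V2), ⟪nab x, y⟫ = ⟪x, δ y⟫)
    (W : V1 →L[ℝ] V1 →L[ℝ] V2)
    (W2 : V2 →L[ℝ] V1 →L[ℝ] V3) (W2' : V1 →L[ℝ] V2 →L[ℝ] V3)
    (hLeib : ∀ x y : V1, nab2 (W x y) = W2 (nab x) y - W2' x (nab y))
    (dag : V1 →L[ℝ] V2 →L[ℝ] V1)
    (E : ℝ → V1) (hE0 : E 0 = 0)
    (E₁ E₂ : V1)
    (hE₁ : Filter.Tendsto (fun t : ℝ => t⁻¹ • E t) (𝓝[≠] 0) (𝓝 E₁))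
    (hE₂ : Filter.Tendsto (fun t : ℝ => (t ^ 2)⁻¹ • (E t - t • E₁))
      (𝓝[≠] 0) (𝓝 E₂))
    (hYM : ∀ t : ℝ,
      δ (nab (E t)) + δ (W (E t) (E t)) + dag (E t) (nab (E t))
        + dag (E t) (W (E t) (E t)) = 0)
    (hE₁flat : nab E₁ = 0) :
    δ (nab E₂ + W E₁ E₁) = 0 ∧ nab2 (nab E₂ + W E₁ E₁) = 0 :=
  second_order_class_of_YangMills_curve_is_harmonic_general V1 V2 V3 nab nab2 hflat δ W W2 W2' hLeib
    dag E E₁ E₂ hE₁ hE₂ hYM hE₁flat
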